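/- arXiv:1502.07966 — 6 statements merged into one kernel-verified Lean document; each statement's English description precedes it below -/
import Mathlib

section
/- Let K ≥ 2 and let H be a K×K complex matrix such that ‖H i j‖ ≤ ε for all indices i ≠ j, ‖H i j‖ ≤ M for all i, j, and det H ≠ 0. Then for all indices k ≠ j, the (j,k) entry of the inverse matrix satisfies ‖(H⁻¹) j k‖ ≤ (K−1)! · ε · M^(K−2) / ‖det H‖. -/
/-! Deleting row `k` and column `j` of `H` leaves, for `k ≠ j`, a minor in which the surviving
part of column `k` of `H` consists of off-diagonal entries of `H`. Each of the `(K-1)!` terms of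
the Leibniz expansion of that minor picks exactly one entry from this column, so it is at most
`ε · M^(K-2)` in norm. -/

open Finset

namespace Matrix

variable {n R : Type*} [Fintype n] [DecidableEq n]

theorem norm_inv_apply {𝕜 : Type*} [NormedField 𝕜] (A : Matrix n n 𝕜) (i j : n) :
    ‖A⁻¹ i j‖ = ‖A.adjugate i j‖ / ‖A.det‖ := by
  rw [inv_def, smul_apply, Ring.inverse_eq_inv', smul_eq_mul, norm_mul, norm_inv, div_eq_inv_mul]

section NormedCommRing

variable [NormedCommRing R] [NormOneClass R] {ε M : ℝ}

theorem norm_prod_perm_le_of_column {A : Matrix n n R} {c : n} (hcol : ∀ i, ‖A i c‖ ≤ ε)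
    (hall : ∀ i j, ‖A i j‖ ≤ M) (σ : Equiv.Perm n) :
    ‖∏ i, A (σ i) i‖ ≤ ε * M ^ (Fintype.card n - 1) := by
  have hε : 0 ≤ ε := (norm_nonneg _).trans (hcol c)
  rw [← mul_prod_erase _ _ (mem_univ c), ← card_univ, ← card_erase_of_mem (mem_univ c)]
  calc ‖A (σ c) c * ∏ i ∈ univ.erase c, A (σ i) i‖
      ≤ ‖A (σ c) c‖ * ∏ i ∈ univ.erase c, ‖A (σ i) i‖ :=
        (norm_mul_le _ _).trans (by gcongr; exact norm_prod_le _ _)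
    _ ≤ ε * ∏ _i ∈ univ.erase c, M := by
        gcongr with i
        · exact hcol _
        · exact hall _ _
    _ = ε * M ^ (univ.erase c).card := by rw [prod_const]

theorem norm_det_le_of_column {A : Matrix n n R} {c : n} (hcol : ∀ i, ‖A i c‖ ≤ ε)
    (hall : ∀ i j, ‖A i j‖ ≤ M) :
    ‖A.det‖ ≤ (Fintype.card n).factorial * ε * M ^ (Fintype.card n - 1) := by
  rw [det_apply, mul_assoc]
  calc ‖∑ σ : Equiv.Perm n, Equiv.Perm.sign σ • ∏ i, A (σ i) i‖
      ≤ ∑ σ : Equiv.Perm n, ‖Equiv.Perm.sign σ • ∏ i, A (σ i) i‖ := norm_sum_le _ _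
    _ ≤ ∑ _σ : Equiv.Perm n, ε * M ^ (Fintype.card n - 1) := by
        gcongr with σ
        rw [norm_units_zsmul]
        exact norm_prod_perm_le_of_column hcol hall σ
    _ = (Fintype.card n).factorial * (ε * M ^ (Fintype.card n - 1)) := by
        rw [sum_const, card_univ, Fintype.card_perm, nsmul_eq_mul]

theorem norm_adjugate_apply_le_of_offDiag {m : ℕ} {A : Matrix (Fin (m + 1)) (Fin (m + 1)) R}
    (hoff : ∀ i j, i ≠ j → ‖A i j‖ ≤ ε) (hall : ∀ i j, ‖A i j‖ ≤ M) {i j : Fin (m + 1)}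
    (hij : i ≠ j) :
    ‖A.adjugate i j‖ ≤ m.factorial * ε * M ^ (m - 1) := by
  obtain ⟨c, hc⟩ := Fin.exists_succAbove_eq hij.symm
  have hcol : ∀ r, ‖A.submatrix j.succAbove i.succAbove r c‖ ≤ ε := fun r => by
    rw [submatrix_apply, hc]
    exact hoff _ _ (Fin.succAbove_ne j r)
  have hminor := norm_det_le_of_column hcol fun r s => hall _ _
  rw [Fintype.card_fin] at hminor
  rw [adjugate_fin_succ_eq_det_submatrix]
  rcases neg_one_pow_eq_or R (j + i : ℕ) with hsign | hsign <;>
    simpa only [hsign, one_mul, neg_one_mul, norm_neg] using hminor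

end NormedCommRing

end Matrix

theorem inverse_offdiag_entry_bound_general (K : ℕ)
    (H : Matrix (Fin K) (Fin K) ℂ) (ε M : ℝ)
    (hoff : ∀ i j : Fin K, i ≠ j → ‖H i j‖ ≤ ε)
    (hall : ∀ i j : Fin K, ‖H i j‖ ≤ M) :
    ∀ k j : Fin K, k ≠ j →
      ‖H⁻¹ j k‖ ≤
        (Nat.factorial (K - 1) : ℝ) * ε * M ^ (K - 2) / ‖H.det‖ := by
  intro k j hkj
  obtain ⟨n, rfl⟩ := Nat.exists_eq_add_one_of_ne_zero k.pos.ne'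
  rw [Matrix.norm_inv_apply, Nat.add_sub_cancel, show n + 1 - 2 = n - 1 by omega]
  exact div_le_div_of_nonneg_right
    (Matrix.norm_adjugate_apply_le_of_offDiag hoff hall hkj.symm) (norm_nonneg _)

/-- Entries of the inverse of a complex matrix with small off-diagonal entries:
if `‖H i j‖ ≤ ε` for `i ≠ j`, `‖H i j‖ ≤ M` for all `i j`, and `det H ≠ 0`, then
`‖(H⁻¹) j k‖ ≤ (K-1)! · ε · M^(K-2) / ‖det H‖` for `k ≠ j`. -/
theorem inverse_offdiag_entry_bound (K : ℕ) (hK : 2 ≤ K)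
    (H : Matrix (Fin K) (Fin K) ℂ) (ε M : ℝ)
    (hoff : ∀ i j : Fin K, i ≠ j → ‖H i j‖ ≤ ε)
    (hall : ∀ i j : Fin K, ‖H i j‖ ≤ M)
    (hdet : H.det ≠ 0) :
    ∀ k j : Fin K, k ≠ j →
      ‖H⁻¹ j k‖ ≤
        (Nat.factorial (K - 1) : ℝ) * ε * M ^ (K - 2) / ‖H.det‖ :=
  inverse_offdiag_entry_bound_general K H ε M hoff hall
end

section
/- For all real a > 0 and r > 1, the integral ∫_{a/(r−1)}^∞ log₂((1 + x/a) · (r−1)/r) · e^{−x} dx equals (e^a / ln 2) · E1(a·r/(r−1)). -/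
open MeasureTheory

/-- The exponential integral `E1 z = ∫_z^∞ e^{-t}/t dt`. -/
noncomputable def expIntegralE1 (z : ℝ) : ℝ := ∫ t in Set.Ioi z, Real.exp (-t) / t

/-!
Substituting `u = x + a` turns the argument of the logarithm into `u / c` with `c = a r / (r - 1)`
and pulls out the factor `e^a / ln 2`. Integrating `∫_c^∞ log (u / c) e^{-u} du` by parts against
`-e^{-u}` leaves `∫_c^∞ e^{-u} / u du = E1 c`, the boundary terms vanishing because `log (u / c)`
is zero at `u = c` and grows slower than `e^u`.
-/

open Set Filter Real Topology

theorem setIntegral_Ioi_comp_add_right {E : Type*} [NormedAddCommGroup E] [NormedSpace ℝ E]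
    (f : ℝ → E) (b d : ℝ) : ∫ x in Ioi b, f (x + d) = ∫ x in Ioi (b + d), f x := by
  have h := (measurePreserving_add_right volume d).setIntegral_preimage_emb
    (MeasurableEquiv.addRight d).measurableEmbedding f (Ioi (b + d))
  rwa [preimage_add_const_Ioi, add_sub_cancel_right] at h

theorem integrableOn_mul_exp_neg_Ioi {c : ℝ} (hc : 0 ≤ c) :
    IntegrableOn (fun u : ℝ => u * exp (-u)) (Ioi c) := by
  have h : IntegrableOn (fun u : ℝ => exp (-u) * u) (Ioi 0) := by
    simpa [one_add_one_eq_two.symm] using GammaIntegral_convergent (s := 2) two_pos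
  exact (h.congr_fun (fun u _ => mul_comm _ _) measurableSet_Ioi).mono_set (Ioi_subset_Ioi hc)

theorem integrableOn_exp_neg_div_Ioi {c : ℝ} (hc : 0 < c) :
    IntegrableOn (fun u : ℝ => exp (-u) / u) (Ioi c) := by
  refine ((integrableOn_exp_neg_Ioi c).const_mul c⁻¹).mono'
    (Measurable.aestronglyMeasurable (by fun_prop)) ?_
  filter_upwards [ae_restrict_mem measurableSet_Ioi] with u (hu : c < u)
  have hu0 : 0 < u := hc.trans hu
  rw [norm_of_nonneg (by positivity), div_eq_inv_mul]
  gcongr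

section LogDiv

variable {c u : ℝ}

theorem log_div_mul_exp_neg_nonneg (hc : 0 < c) (hu : c ≤ u) : 0 ≤ log (u / c) * exp (-u) :=
  mul_nonneg (log_nonneg ((one_le_div hc).2 hu)) (exp_pos _).le

theorem log_div_mul_exp_neg_le (hc : 0 < c) (hu : c ≤ u) :
    log (u / c) * exp (-u) ≤ c⁻¹ * (u * exp (-u)) := by
  calc log (u / c) * exp (-u) ≤ u / c * exp (-u) := by
        gcongr; exact log_le_self (div_nonneg (hc.le.trans hu) hc.le)
    _ = c⁻¹ * (u * exp (-u)) := by ring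

theorem integrableOn_log_div_mul_exp_neg_Ioi (hc : 0 < c) :
    IntegrableOn (fun u : ℝ => log (u / c) * exp (-u)) (Ioi c) := by
  refine ((integrableOn_mul_exp_neg_Ioi hc.le).const_mul c⁻¹).mono' (by fun_prop) ?_
  filter_upwards [ae_restrict_mem measurableSet_Ioi] with u (hu : c < u)
  rw [norm_of_nonneg (log_div_mul_exp_neg_nonneg hc hu.le)]
  exact log_div_mul_exp_neg_le hc hu.le

theorem tendsto_log_div_mul_exp_neg_atTop (hc : 0 < c) :
    Tendsto (fun u : ℝ => log (u / c) * exp (-u)) atTop (𝓝 0) := by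
  have h : Tendsto (fun u : ℝ => c⁻¹ * (u * exp (-u))) atTop (𝓝 0) := by
    simpa using (tendsto_pow_mul_exp_neg_atTop_nhds_zero 1).const_mul c⁻¹
  refine squeeze_zero' ?_ ?_ h <;> filter_upwards [eventually_ge_atTop c] with u hu
  exacts [log_div_mul_exp_neg_nonneg hc hu, log_div_mul_exp_neg_le hc hu]

theorem integral_log_div_mul_exp_neg_Ioi (hc : 0 < c) :
    ∫ u in Ioi c, log (u / c) * exp (-u) = expIntegralE1 c := by
  have hlog : ∀ u ∈ Ioi c, HasDerivAt (fun u => log (u / c)) u⁻¹ u := fun u (hu : c < u) => by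
    have hu0 : 0 < u := hc.trans hu
    exact (((hasDerivAt_id u).div_const c).log (by positivity)).congr_deriv (by simp [field])
  have hexp : ∀ u ∈ Ioi c, HasDerivAt (fun u => -exp (-u)) (exp (-u)) u := fun u _ => by
    simpa using ((hasDerivAt_neg u).exp).fun_neg
  have h_zero : Tendsto (fun u => log (u / c) * -exp (-u)) (𝓝[>] c) (𝓝 0) := by
    have h : ContinuousAt (fun u => log (u / c) * -exp (-u)) c := by
      fun_prop (disch := positivity)
    simpa [hc.ne'] using h.tendsto.mono_left nhdsWithin_le_nhds
  have h_infty : Tendsto (fun u => log (u / c) * -exp (-u)) atTop (𝓝 0) := by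
    simpa using (tendsto_log_div_mul_exp_neg_atTop hc).neg
  have hparts := integral_Ioi_mul_deriv_eq_deriv_mul hlog hexp
    (integrableOn_log_div_mul_exp_neg_Ioi hc)
    ((integrableOn_exp_neg_div_Ioi hc).neg.congr_fun (fun u _ => by simp [div_eq_inv_mul])
      measurableSet_Ioi)
    h_zero h_infty
  simpa [expIntegralE1, div_eq_inv_mul, ← integral_neg] using hparts

end LogDiv

/-- For `a > 0` and `r > 1`,
`∫_{a/(r-1)}^∞ log₂((1 + x/a)·(r-1)/r) e^{-x} dx = (e^a/ln 2) · E1(a r/(r-1))`. -/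
theorem integral_logb_rate_exp (a r : ℝ) (ha : 0 < a) (hr : 1 < r) :
    ∫ x in Set.Ioi (a / (r - 1)),
        Real.logb 2 ((1 + x / a) * (r - 1) / r) * Real.exp (-x)
      = (Real.exp a / Real.log 2) * expIntegralE1 (a * r / (r - 1)) := by
  have hr1 : 0 < r - 1 := sub_pos.2 hr
  set c := a * r / (r - 1) with hc_def
  have hc : 0 < c := by positivity
  have hshift : a / (r - 1) + a = c := by rw [hc_def]; field_simp; ring
  have hintegrand : ∀ x ∈ Ioi (a / (r - 1)), logb 2 ((1 + x / a) * (r - 1) / r) * exp (-x)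
      = exp a / log 2 * (log ((x + a) / c) * exp (-(x + a))) := fun x _ => by
    have harg : (1 + x / a) * (r - 1) / r = (x + a) / c := by
      rw [hc_def]
      field_simp
      ring
    have hexp : exp (-x) = exp a * exp (-(x + a)) := by rw [← exp_add]; ring_nf
    rw [harg, hexp, logb]
    ring
  rw [setIntegral_congr_fun measurableSet_Ioi hintegrand,
    setIntegral_Ioi_comp_add_right (fun u => exp a / log 2 * (log (u / c) * exp (-u))), hshift,
    integral_const_mul, integral_log_div_mul_exp_neg_Ioi hc]
end

section
/- For all real P, h, N₀, w > 0 and every real γ, the function g(C) = γ·C − w · log₂(2^C · (P·h + N₀) / (2^C · N₀ + P·h)) is strictly convex on ℝ. -/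
/-!
Since `log₂ (2^C A / (2^C N₀ + B)) = C + log₂ A - log₂ (2^C N₀ + B)`, the objective is an affine
function plus `w · log₂ (2^C N₀ + B)`. The derivative of `log₂ (2^C N₀ + B)` is
`2^C N₀ / (2^C N₀ + B)`, which is strictly increasing in `C` when `N₀, B > 0`.
-/

open Real Set

theorem StrictConvexOn.const_mul {E : Type*} [AddCommMonoid E] [Module ℝ E] {s : Set E}
    {f : E → ℝ} {c : ℝ} (hf : StrictConvexOn ℝ s f) (hc : 0 < c) :
    StrictConvexOn ℝ s fun x => c * f x :=
  ⟨hf.1, fun x hx y hy hxy a b ha hb hab => by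
    have := mul_lt_mul_of_pos_left (hf.2 hx hy hxy ha hb hab) hc
    simp only [smul_eq_mul] at this ⊢
    linarith⟩

theorem logb_rpow_mul_div {c A D : ℝ} (hc : 0 < c) (hc1 : c ≠ 1) (hA : A ≠ 0) (hD : D ≠ 0)
    (x : ℝ) : logb c (c ^ x * A / D) = x + logb c A - logb c D := by
  have hcx : c ^ x ≠ 0 := (rpow_pos_of_pos hc x).ne'
  rw [logb_div (mul_ne_zero hcx hA) hD, logb_mul hcx hA, logb_rpow hc hc1]

theorem hasDerivAt_logb_rpow_mul_add {c a b : ℝ} (hc : 1 < c) (hpos : ∀ x : ℝ, 0 < c ^ x * a + b)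
    (x : ℝ) :
    HasDerivAt (fun x => logb c (c ^ x * a + b)) (c ^ x * a / (c ^ x * a + b)) x := by
  have hlogc : log c ≠ 0 := (log_pos hc).ne'
  have hinner := ((hasStrictDerivAt_const_rpow (by linarith) x).hasDerivAt.mul_const a).add_const b
  exact ((hinner.log (hpos x).ne').div_const (log c)).congr_deriv (by field_simp)

theorem strictConvexOn_logb_rpow_mul_add {c a b : ℝ} (hc : 1 < c) (ha : 0 < a) (hb : 0 < b) :
    StrictConvexOn ℝ univ fun x : ℝ => logb c (c ^ x * a + b) := by
  have hpos : ∀ x : ℝ, 0 < c ^ x * a + b := fun x => by positivity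
  have hderiv := hasDerivAt_logb_rpow_mul_add hc hpos
  refine StrictMonoOn.strictConvexOn_of_deriv convex_univ
    (fun x _ => (hderiv x).continuousAt.continuousWithinAt) fun x _ y _ hxy => ?_
  have hcxy : c ^ x < c ^ y := rpow_lt_rpow_of_exponent_lt hc hxy
  rw [(hderiv x).deriv, (hderiv y).deriv, div_lt_div_iff₀ (hpos x) (hpos y)]
  linarith [mul_lt_mul_of_pos_left hcxy (mul_pos ha hb)]

/-- For `P, h, N₀, w > 0` and any real `γ`, the per-flow per-stage objective
`g(C) = γ C - w log₂(2^C (Ph+N₀)/(2^C N₀ + Ph))` is strictly convex on `ℝ`. -/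
theorem perStage_objective_strictConvex (P h N₀ w γ : ℝ)
    (hP : 0 < P) (hh : 0 < h) (hN : 0 < N₀) (hw : 0 < w) :
    StrictConvexOn ℝ Set.univ
      (fun C : ℝ =>
        γ * C - w * Real.logb 2 ((2 : ℝ) ^ C * (P * h + N₀) / ((2 : ℝ) ^ C * N₀ + P * h))) := by
  have hPh : 0 < P * h := mul_pos hP hh
  have haffine : ConvexOn ℝ univ fun C : ℝ => (γ - w) * C - w * logb 2 (P * h + N₀) :=
    ((LinearMap.mul ℝ ℝ (γ - w)).convexOn convex_univ).sub (concaveOn_const _ convex_univ)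
  have hrate : StrictConvexOn ℝ univ fun C : ℝ => w * logb 2 (2 ^ C * N₀ + P * h) :=
    (strictConvexOn_logb_rpow_mul_add one_lt_two hN hPh).const_mul hw
  refine (haffine.add_strictConvexOn hrate).congr fun C _ => ?_
  rw [logb_rpow_mul_div two_pos (by norm_num) (by positivity) (by positivity)]
  simp only [Pi.add_apply]
  ring
end

section
/- Let P, h, N₀, γ, w > 0 be real numbers and define g(C) = γ·C − w · log₂(2^C · (P·h + N₀) / (2^C · N₀ + P·h)). Define C* = log₂((P·h/N₀)·(w/γ − 1)) if w > γ and (P·h/N₀)·(w/γ − 1) > 1, and C* = 0 otherwise. Then C* ≥ 0, and for every C ≥ 0 with C ≠ C* one has g(C*) < g(C); i.e., C* is the unique minimizer of g over [0, ∞). -/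
/-!
Writing `D(C) = 2^C N₀ + Ph`, the objective is `γ C - w (C + log₂(Ph + N₀) - log₂ D(C))`,
so `g'(C) = γ - w Ph / D(C) = γ N₀ (2^C - K) / D(C)` with `K = (Ph/N₀)(w/γ - 1)`.
Hence `g` decreases while `2^C < K` and increases once `2^C > K`. If `K > 1` the minimum
over `[0, ∞)` is at `C = log₂ K > 0`; otherwise `g' > 0` on `(0, ∞)` and the minimum is
at `C = 0`.
-/

open Real Set

theorem lt_of_hasDerivAt_pos_of_lt {f f' : ℝ → ℝ} {c x : ℝ}
    (hf : ∀ y, HasDerivAt f (f' y) y)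
    (hf' : ∀ y, c < y → 0 < f' y) (hx : c < x) : f c < f x :=
  strictMonoOn_of_hasDerivWithinAt_pos (convex_Ici c)
    (fun y _ => (hf y).continuousAt.continuousWithinAt) (fun y _ => (hf y).hasDerivWithinAt)
    (fun y hy => hf' y (by simpa using hy)) self_mem_Ici hx.le hx

theorem lt_of_hasDerivAt_neg_of_gt {f f' : ℝ → ℝ} {c x : ℝ}
    (hf : ∀ y, HasDerivAt f (f' y) y)
    (hf' : ∀ y, y < c → f' y < 0) (hx : x < c) : f c < f x :=
  strictAntiOn_of_hasDerivWithinAt_neg (convex_Iic c)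
    (fun y _ => (hf y).continuousAt.continuousWithinAt) (fun y _ => (hf y).hasDerivWithinAt)
    (fun y hy => hf' y (by simpa using hy)) hx.le self_mem_Iic hx

noncomputable def uplinkRate (a N₀ C : ℝ) : ℝ :=
  logb 2 ((2 : ℝ) ^ C * (a + N₀) / ((2 : ℝ) ^ C * N₀ + a))

section UplinkRate

variable {a N₀ : ℝ}

theorem uplinkRate_eq (ha : 0 < a) (hN : 0 ≤ N₀) (C : ℝ) :
    uplinkRate a N₀ C = C + logb 2 (a + N₀) - log ((2 : ℝ) ^ C * N₀ + a) / log 2 := by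
  have hD : 0 < (2 : ℝ) ^ C * N₀ + a := by positivity
  rw [uplinkRate, logb_div (by positivity) hD.ne', logb_mul (by positivity) (by positivity),
    logb_rpow two_pos (by norm_num), logb, logb]

theorem hasDerivAt_uplinkRate (ha : 0 < a) (hN : 0 ≤ N₀) (C : ℝ) :
    HasDerivAt (uplinkRate a N₀) (a / ((2 : ℝ) ^ C * N₀ + a)) C := by
  have hD : 0 < (2 : ℝ) ^ C * N₀ + a := by positivity
  have hlogD : HasDerivAt (fun x : ℝ => log ((2 : ℝ) ^ x * N₀ + a))
      ((2 : ℝ) ^ C * log 2 * N₀ / ((2 : ℝ) ^ C * N₀ + a)) C :=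
    ((((hasStrictDerivAt_const_rpow two_pos C).hasDerivAt).mul_const N₀).add_const a).log hD.ne'
  have hsum : HasDerivAt (fun x => x + logb 2 (a + N₀) - log ((2 : ℝ) ^ x * N₀ + a) / log 2)
      (1 - (2 : ℝ) ^ C * log 2 * N₀ / ((2 : ℝ) ^ C * N₀ + a) / log 2) C :=
    ((hasDerivAt_id' C).add_const _).sub (hlogD.div_const _)
  rw [show uplinkRate a N₀ = _ from funext (uplinkRate_eq ha hN)]
  convert hsum using 1
  field_simp
  ring

theorem hasDerivAt_objective (γ w : ℝ) (ha : 0 < a) (hN : 0 ≤ N₀) (C : ℝ) :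
    HasDerivAt (fun C => γ * C - w * uplinkRate a N₀ C)
      (γ - w * a / ((2 : ℝ) ^ C * N₀ + a)) C :=
  (((hasDerivAt_id' C).const_mul γ).sub
    ((hasDerivAt_uplinkRate ha hN C).const_mul w)).congr_deriv (by ring)

end UplinkRate

section MarginalCost

variable {γ w a N₀ x : ℝ}

theorem marginalCost_eq (hγ : 0 < γ) (hN : 0 < N₀) (hD : 0 < x * N₀ + a) :
    γ - w * a / (x * N₀ + a) = γ * N₀ * (x - a / N₀ * (w / γ - 1)) / (x * N₀ + a) := by
  field_simp
  ring

theorem marginalCost_pos_iff (hγ : 0 < γ) (hN : 0 < N₀) (hD : 0 < x * N₀ + a) :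
    0 < γ - w * a / (x * N₀ + a) ↔ a / N₀ * (w / γ - 1) < x := by
  rw [marginalCost_eq hγ hN hD, div_pos_iff_of_pos_right hD,
    mul_pos_iff_of_pos_left (by positivity), sub_pos]

theorem marginalCost_neg_iff (hγ : 0 < γ) (hN : 0 < N₀) (hD : 0 < x * N₀ + a) :
    γ - w * a / (x * N₀ + a) < 0 ↔ x < a / N₀ * (w / γ - 1) := by
  have hγN : 0 < γ * N₀ := by positivity
  rw [marginalCost_eq hγ hN hD, div_lt_iff₀ hD, zero_mul]
  exact ⟨fun h => sub_neg.1 (neg_of_mul_neg_right h hγN.le),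
    fun h => mul_neg_of_pos_of_neg hγN (sub_neg.2 h)⟩

end MarginalCost

open Classical in
theorem perStage_objective_unique_minimizer_general (P h N₀ γ w : ℝ)
    (hP : 0 < P) (hh : 0 < h) (hN : 0 < N₀) (hγ : 0 < γ)
    (g : ℝ → ℝ)
    (hg : ∀ C : ℝ, g C =
      γ * C - w * Real.logb 2 ((2 : ℝ) ^ C * (P * h + N₀) / ((2 : ℝ) ^ C * N₀ + P * h)))
    (Cstar : ℝ)
    (hCstar : Cstar =
      if γ < w ∧ 1 < P * h / N₀ * (w / γ - 1)
      then Real.logb 2 (P * h / N₀ * (w / γ - 1)) else 0) :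
    0 ≤ Cstar ∧ ∀ C : ℝ, 0 ≤ C → C ≠ Cstar → g Cstar < g C := by
  have ha : 0 < P * h := mul_pos hP hh
  have hD : ∀ C : ℝ, 0 < (2 : ℝ) ^ C * N₀ + P * h := fun C => by positivity
  have hderiv : ∀ C, HasDerivAt g (γ - w * (P * h) / ((2 : ℝ) ^ C * N₀ + P * h)) C := by
    rw [show g = _ from funext hg]
    exact hasDerivAt_objective γ w ha hN.le
  set K := P * h / N₀ * (w / γ - 1)
  by_cases hK : γ < w ∧ 1 < K
  · have hCstar' : Cstar = logb 2 K := by rw [hCstar, if_pos hK]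
    have hK0 : 0 < K := one_pos.trans hK.2
    refine ⟨hCstar' ▸ (logb_pos one_lt_two hK.2).le, fun C _ hne => hne.lt_or_gt.elim
      (lt_of_hasDerivAt_neg_of_gt hderiv fun y hy => (marginalCost_neg_iff hγ hN (hD y)).2
        ((lt_logb_iff_rpow_lt one_lt_two hK0).1 (hCstar' ▸ hy)))
      (lt_of_hasDerivAt_pos_of_lt hderiv fun y hy => (marginalCost_pos_iff hγ hN (hD y)).2
        ((logb_lt_iff_lt_rpow one_lt_two hK0).1 (hCstar' ▸ hy)))⟩
  · have hK1 : K ≤ 1 := by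
      -- `K > 1` already forces `γ < w`
      by_contra! hK1
      refine hK ⟨?_, hK1⟩
      have : 0 < w / γ - 1 := pos_of_mul_pos_right (one_pos.trans hK1) (by positivity)
      rwa [sub_pos, one_lt_div hγ] at this
    obtain rfl : Cstar = 0 := by rw [hCstar, if_neg hK]
    refine ⟨le_rfl, fun C hC hne => lt_of_hasDerivAt_pos_of_lt hderiv (fun y hy =>
      (marginalCost_pos_iff hγ hN (hD y)).2 (hK1.trans_lt (one_lt_rpow one_lt_two hy)))
      (hC.lt_of_ne hne.symm)⟩

open Classical in
/-- The optimal per-flow fronthaul capacity: `C* = log₂((Ph/N₀)(w/γ - 1))` when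
`w > γ` and `(Ph/N₀)(w/γ - 1) > 1`, and `C* = 0` otherwise, is the unique minimizer
of `g(C) = γ C - w log₂(2^C (Ph+N₀)/(2^C N₀ + Ph))` over `[0, ∞)`. -/
theorem perStage_objective_unique_minimizer (P h N₀ γ w : ℝ)
    (hP : 0 < P) (hh : 0 < h) (hN : 0 < N₀) (hγ : 0 < γ) (hw : 0 < w)
    (g : ℝ → ℝ)
    (hg : ∀ C : ℝ, g C =
      γ * C - w * Real.logb 2 ((2 : ℝ) ^ C * (P * h + N₀) / ((2 : ℝ) ^ C * N₀ + P * h)))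
    (Cstar : ℝ)
    (hCstar : Cstar =
      if γ < w ∧ 1 < P * h / N₀ * (w / γ - 1)
      then Real.logb 2 (P * h / N₀ * (w / γ - 1)) else 0) :
    0 ≤ Cstar ∧ ∀ C : ℝ, 0 ≤ C → C ≠ Cstar → g Cstar < g C :=
  perStage_objective_unique_minimizer_general P h N₀ γ w hP hh hN hγ g hg Cstar hCstar
end

section
/- Let P, h, N₀ > 0 be real numbers and for C > 0 define the rate R(C) = log₂(1 + P·h/(N₀ + (P·h + N₀)/(2^C − 1))). Then (i) for every C > 0, R(C) = log₂(2^C · (P·h + N₀)/(2^C · N₀ + P·h)); (ii) R is strictly increasing and strictly concave on (0, ∞); (iii) R(C) → 0 as C → 0⁺; and (iv) R(C) → log₂(1 + P·h/N₀) as C → ∞. -/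
/-!
Write `a = P·h`, `N = N₀` and `X = b ^ C`. Clearing the nested fraction turns the rate into
`log_b (X (a + N) / (X N + a)) = C + log_b (a + N) - log_b (b ^ C N + a)`, which makes sense for
every real `C` and has derivative `a / (b ^ C N + a)`. That derivative is positive and strictly
decreasing in `C`, so the rate is strictly increasing and strictly concave. Its argument equals `1`
at `C = 0` and tends to `(a + N) / N` as `C → ∞`.
-/

open Filter Topology Real

theorem one_add_div_add_div_sub_one {a N X : ℝ} (ha : 0 < a) (hN : 0 < N) (hX : 1 < X) :
    1 + a / (N + (a + N) / (X - 1)) = X * (a + N) / (X * N + a) := by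
  have hX1 : 0 < X - 1 := sub_pos.mpr hX
  field_simp
  ring

noncomputable def fronthaulRate (b a N C : ℝ) : ℝ :=
  logb b (b ^ C * (a + N) / (b ^ C * N + a))

namespace fronthaulRate

variable {b a N : ℝ}

theorem eq_sub_logb (hb : 1 < b) (ha : 0 < a) (hN : 0 < N) (C : ℝ) :
    fronthaulRate b a N C = C + logb b (a + N) - logb b (b ^ C * N + a) := by
  have hbC : 0 < b ^ C := rpow_pos_of_pos (by linarith) C
  rw [fronthaulRate, logb_div (by positivity) (by positivity), logb_mul hbC.ne' (by positivity),
    logb_rpow (by linarith) hb.ne']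

theorem hasDerivAt (hb : 1 < b) (ha : 0 < a) (hN : 0 < N) (C : ℝ) :
    HasDerivAt (fronthaulRate b a N) (a / (b ^ C * N + a)) C := by
  have hbC : 0 < b ^ C := rpow_pos_of_pos (by linarith) C
  have hlogb : 0 < log b := log_pos hb
  have hden : HasDerivAt (fun C => b ^ C * N + a) (log b * b ^ C * N) C := by
    simpa using (((hasDerivAt_id C).const_rpow (by linarith : 0 < b)).mul_const N).add_const a
  have hrate : fronthaulRate b a N = fun C => C + logb b (a + N) - log (b ^ C * N + a) / log b :=
    funext (eq_sub_logb hb ha hN)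
  rw [hrate]
  refine (((hasDerivAt_id C).add_const _).sub
    ((hden.log (by positivity)).div_const _)).congr_deriv ?_
  field_simp
  ring

theorem deriv_eq (hb : 1 < b) (ha : 0 < a) (hN : 0 < N) :
    deriv (fronthaulRate b a N) = fun C => a / (b ^ C * N + a) :=
  funext fun C => (hasDerivAt hb ha hN C).deriv

theorem continuous (hb : 1 < b) (ha : 0 < a) (hN : 0 < N) : Continuous (fronthaulRate b a N) :=
  continuous_iff_continuousAt.mpr fun C => (hasDerivAt hb ha hN C).continuousAt

theorem strictMono (hb : 1 < b) (ha : 0 < a) (hN : 0 < N) : StrictMono (fronthaulRate b a N) :=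
  strictMono_of_deriv_pos fun C => by
    rw [deriv_eq hb ha hN]
    have := rpow_pos_of_pos (by linarith : 0 < b) C
    positivity

theorem strictConcaveOn_univ (hb : 1 < b) (ha : 0 < a) (hN : 0 < N) :
    StrictConcaveOn ℝ Set.univ (fronthaulRate b a N) := by
  refine StrictAnti.strictConcaveOn_univ_of_deriv (continuous hb ha hN) fun C D hCD => ?_
  rw [deriv_eq hb ha hN]
  have := rpow_pos_of_pos (by linarith : 0 < b) C
  have := rpow_lt_rpow_of_exponent_lt hb hCD
  exact div_lt_div_of_pos_left ha (by positivity) (by gcongr)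

theorem zero (ha : 0 < a) (hN : 0 < N) : fronthaulRate b a N 0 = 0 := by
  rw [fronthaulRate, rpow_zero, one_mul, one_mul, add_comm N, div_self (by positivity), logb_one]

theorem tendsto_atTop (hb : 1 < b) (ha : 0 < a) (hN : 0 < N) :
    Tendsto (fronthaulRate b a N) atTop (𝓝 (logb b (1 + a / N))) := by
  have hden : Tendsto (fun X => N + a * X⁻¹) atTop (𝓝 N) := by
    simpa using (tendsto_inv_atTop_zero.const_mul a).const_add N
  have hquot : Tendsto (fun X => (a + N) / (N + a * X⁻¹)) atTop (𝓝 ((a + N) / N)) :=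
    tendsto_const_nhds.div hden hN.ne'
  have hlim := ((continuousAt_logb (b := b) (by positivity)).tendsto.comp hquot).comp
    (tendsto_rpow_atTop_of_base_gt_one b hb)
  rw [one_add_div hN.ne', add_comm N]
  refine hlim.congr fun C => ?_
  have hbC := rpow_pos_of_pos (by linarith : 0 < b) C
  simp only [Function.comp, fronthaulRate]
  congr 1
  field_simp

end fronthaulRate

/-- Properties of the per-flow uplink rate
`R(C) = log₂(1 + Ph/(N₀ + (Ph+N₀)/(2^C - 1)))` for `C > 0`:
(i) the alternative form `R(C) = log₂(2^C (Ph+N₀)/(2^C N₀ + Ph))`;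
(ii) strict monotonicity and strict concavity on `(0,∞)`;
(iii) `R(C) → 0` as `C → 0⁺`; (iv) `R(C) → log₂(1 + Ph/N₀)` as `C → ∞`. -/
theorem uplink_rate_properties (P h N₀ : ℝ) (hP : 0 < P) (hh : 0 < h) (hN : 0 < N₀)
    (R : ℝ → ℝ)
    (hR : ∀ C ∈ Set.Ioi (0 : ℝ),
      R C = Real.logb 2 (1 + P * h / (N₀ + (P * h + N₀) / ((2 : ℝ) ^ C - 1)))) :
    (∀ C ∈ Set.Ioi (0 : ℝ),
        R C = Real.logb 2 ((2 : ℝ) ^ C * (P * h + N₀) / ((2 : ℝ) ^ C * N₀ + P * h))) ∧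
    StrictMonoOn R (Set.Ioi (0 : ℝ)) ∧
    StrictConcaveOn ℝ (Set.Ioi (0 : ℝ)) R ∧
    Tendsto R (nhdsWithin 0 (Set.Ioi (0 : ℝ))) (nhds 0) ∧
    Tendsto R atTop (nhds (Real.logb 2 (1 + P * h / N₀))) := by
  have ha : 0 < P * h := mul_pos hP hh
  have hb : (1 : ℝ) < 2 := one_lt_two
  have hRate : Set.EqOn (fronthaulRate 2 (P * h) N₀) R (Set.Ioi 0) := fun C hC => by
    rw [hR C hC, one_add_div_add_div_sub_one ha hN (one_lt_rpow hb hC), fronthaulRate]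
  refine ⟨fun C hC => (hRate hC).symm, ?_, ?_, ?_, ?_⟩
  · exact ((fronthaulRate.strictMono hb ha hN).strictMonoOn _).congr hRate
  · exact ((fronthaulRate.strictConcaveOn_univ hb ha hN).subset (Set.subset_univ _)
      (convex_Ioi 0)).congr hRate
  · have hcont := (fronthaulRate.continuous hb ha hN).tendsto 0
    rw [fronthaulRate.zero ha hN] at hcont
    exact (hcont.mono_left nhdsWithin_le_nhds).congr'
      (eventuallyEq_of_mem self_mem_nhdsWithin hRate)
  · exact (fronthaulRate.tendsto_atTop hb ha hN).congr'
      (eventuallyEq_of_mem (Ioi_mem_atTop 0) hRate)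
end

section
/- Let a, γ, β, λ > 0 be real numbers with λ < (e^a / ln 2) · E1(a), let d > γ be the unique number satisfying (e^a / ln 2) · E1(a·d/(d − γ)) = λ, and set c∞ = (γ / ln 2) · E1(a·γ/(d − γ)). Define, for ν > γ, Q(ν) = (λ/β) · ( (e^a / ln 2) · ν · E1(a·ν/(ν − γ)) − λ·ν − (γ / ln 2) · E1(a·γ/(ν − γ)) + c∞ ). Then Q(d) = 0, Q is strictly increasing on [d, ∞), and Q(ν) → ∞ as ν → ∞; hence Q restricted to [d, ∞) is a bijection onto [0, ∞). -/
open MeasureTheory Filter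

/-!
Writing `r(ν) = (e^a / ln 2) E1(aν/(ν-γ))`, the derivatives of the two `E1` terms of `Q` cancel
because `aν/(ν-γ) = a + aγ/(ν-γ)`, leaving `Q'(ν) = (λ/β)(r(ν) - λ)`. Since `E1` decreases and
`aν/(ν-γ)` decreases in `ν`, `r` increases, and `r(d) = λ` makes `Q' > 0` beyond `d`. The bound
`E1(z) ≤ 1 - log z` on `(0, 1]` gives `Q(ν) ≥ (λ/β)((r(d+1) - λ)ν - (γ/ln 2) log ν + C)`, so
`Q → ∞`, and the intermediate value theorem yields surjectivity onto `[0, ∞)`.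
-/

open Set

lemma continuousOn_exp_neg_div : ContinuousOn (fun t : ℝ => Real.exp (-t) / t) (Ioi 0) :=
  ContinuousOn.div (by fun_prop) continuousOn_id fun _ ht => ht.ne'

lemma integrableOn_exp_neg_div_Ioi_s10 {z : ℝ} (hz : 0 < z) :
    IntegrableOn (fun t : ℝ => Real.exp (-t) / t) (Ioi z) := by
  refine Integrable.mono' ((exp_neg_integrableOn_Ioi z one_pos).div_const z)
    ((continuousOn_exp_neg_div.mono fun _ ht => hz.trans ht).aestronglyMeasurable
      measurableSet_Ioi) ?_
  filter_upwards [ae_restrict_mem measurableSet_Ioi] with t (ht : z < t)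
  rw [Real.norm_eq_abs, abs_of_pos (div_pos (Real.exp_pos _) (hz.trans ht)), neg_one_mul]
  exact div_le_div_of_nonneg_left (Real.exp_pos _).le hz ht.le

lemma expIntegralE1_eq_integral_Ioc_add {x y : ℝ} (hx : 0 < x) (hxy : x ≤ y) :
    expIntegralE1 x = (∫ t in Ioc x y, Real.exp (-t) / t) + expIntegralE1 y := by
  rw [expIntegralE1, ← Ioc_union_Ioi_eq_Ioi hxy,
    setIntegral_union (Ioc_disjoint_Ioi le_rfl) measurableSet_Ioi
      ((integrableOn_exp_neg_div_Ioi_s10 hx).mono_set Ioc_subset_Ioi_self)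
      (integrableOn_exp_neg_div_Ioi_s10 (hx.trans_le hxy))]
  rfl

lemma hasDerivAt_expIntegralE1 {z : ℝ} (hz : 0 < z) :
    HasDerivAt expIntegralE1 (-(Real.exp (-z) / z)) z := by
  have hE1 : ∀ x ∈ Ioi (0 : ℝ),
      expIntegralE1 x = expIntegralE1 1 - ∫ t in (1 : ℝ)..x, Real.exp (-t) / t := by
    intro x (hx : 0 < x)
    rcases le_total 1 x with h | h
    · rw [intervalIntegral.integral_of_le h, expIntegralE1_eq_integral_Ioc_add one_pos h]
      ring
    · rw [intervalIntegral.integral_symm, intervalIntegral.integral_of_le h,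
        expIntegralE1_eq_integral_Ioc_add hx h]
      ring
  have hint : IntervalIntegrable (fun t : ℝ => Real.exp (-t) / t) volume 1 z :=
    (continuousOn_exp_neg_div.mono fun t ht =>
      lt_of_lt_of_le (lt_min one_pos hz) ht.1).intervalIntegrable
  have hderiv := (intervalIntegral.integral_hasDerivAt_right hint
    (continuousOn_exp_neg_div.stronglyMeasurableAtFilter isOpen_Ioi z hz)
    (continuousOn_exp_neg_div.continuousAt (Ioi_mem_nhds hz))).const_sub (expIntegralE1 1)
  exact hderiv.congr_of_eventuallyEq (eventually_of_mem (Ioi_mem_nhds hz) hE1)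

lemma expIntegralE1_strictAntiOn : StrictAntiOn expIntegralE1 (Ioi 0) :=
  strictAntiOn_of_hasDerivWithinAt_neg (convex_Ioi 0)
    (fun _ hz => (hasDerivAt_expIntegralE1 hz).continuousAt.continuousWithinAt)
    (fun _ hz => (hasDerivAt_expIntegralE1 (interior_subset hz)).hasDerivWithinAt)
    (fun _ hz => neg_neg_of_pos (div_pos (Real.exp_pos _) (interior_subset (s := Ioi 0) hz)))

lemma expIntegralE1_le_exp_neg_div {z : ℝ} (hz : 0 < z) :
    expIntegralE1 z ≤ Real.exp (-z) / z := by
  calc expIntegralE1 z ≤ ∫ t in Ioi z, Real.exp (-t) / z := by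
        refine setIntegral_mono_on (integrableOn_exp_neg_div_Ioi_s10 hz)
          (by simpa only [IntegrableOn, neg_one_mul] using
            (exp_neg_integrableOn_Ioi z one_pos).div_const z)
          measurableSet_Ioi
          fun t (ht : z < t) => div_le_div_of_nonneg_left (Real.exp_pos _).le hz ht.le
    _ = Real.exp (-z) / z := by rw [integral_div, integral_exp_neg_Ioi]

lemma expIntegralE1_le_neg_log_add_one {z : ℝ} (hz : 0 < z) (hz1 : z ≤ 1) :
    expIntegralE1 z ≤ -Real.log z + 1 := by
  have hnear : (∫ t in Ioc z 1, Real.exp (-t) / t) ≤ ∫ t in Ioc z 1, t⁻¹ := by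
    refine setIntegral_mono_on ((integrableOn_exp_neg_div_Ioi_s10 hz).mono_set Ioc_subset_Ioi_self)
      ((continuousOn_inv₀.mono fun t ht => (hz.trans_le ht.1).ne').integrableOn_Icc.mono_set
        Ioc_subset_Icc_self) measurableSet_Ioc fun t ht => ?_
    rw [div_eq_mul_inv]
    exact mul_le_of_le_one_left (inv_pos.2 (hz.trans ht.1)).le
      (Real.exp_le_one_iff.2 (by linarith [hz.trans ht.1]))
  have hlog : (∫ t in Ioc z 1, t⁻¹) = -Real.log z := by
    rw [← intervalIntegral.integral_of_le hz1, integral_inv_of_pos hz one_pos, Real.log_div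
      one_ne_zero hz.ne', Real.log_one, zero_sub]
  have hfar : expIntegralE1 1 ≤ 1 :=
    (expIntegralE1_le_exp_neg_div one_pos).trans (by simp)
  linarith [expIntegralE1_eq_integral_Ioc_add hz hz1]

lemma tendsto_mul_sub_mul_log_add_atTop {ε : ℝ} (K C : ℝ) (hε : 0 < ε) :
    Tendsto (fun x : ℝ => ε * x - K * Real.log x + C) atTop atTop := by
  have hslope : Tendsto (fun x : ℝ => ε - K * (Real.log x / x)) atTop (nhds ε) := by
    simpa using tendsto_const_nhds.sub
      (Real.isLittleO_log_id_atTop.tendsto_div_nhds_zero.const_mul K)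
  refine tendsto_atTop_add_const_right _ C ((tendsto_id.atTop_mul_pos hε hslope).congr' ?_)
  filter_upwards [eventually_gt_atTop 0] with x hx
  simp only [id_eq]
  field_simp

lemma StrictMonoOn.bijOn_Ici_of_tendsto {α δ : Type*} [ConditionallyCompleteLinearOrder α]
    [TopologicalSpace α] [OrderTopology α] [DenselyOrdered α] [LinearOrder δ] [TopologicalSpace δ]
    [OrderClosedTopology δ] {f : α → δ} {a : α} (hmono : StrictMonoOn f (Ici a))
    (hf : ContinuousOn f (Ici a)) (htop : Tendsto f atTop atTop) :
    BijOn f (Ici a) (Ici (f a)) :=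
  hf.image_Ici_of_monotoneOn hmono.monotoneOn htop ▸ hmono.injOn.bijOn_image

namespace ParametricQueue

noncomputable def rate (a γ ν : ℝ) : ℝ :=
  Real.exp a / Real.log 2 * expIntegralE1 (a * ν / (ν - γ))

noncomputable def queueLength (a γ β lam cInf ν : ℝ) : ℝ :=
  lam / β * (Real.exp a / Real.log 2 * ν * expIntegralE1 (a * ν / (ν - γ))
    - lam * ν - γ / Real.log 2 * expIntegralE1 (a * γ / (ν - γ)) + cInf)

variable {a γ β lam cInf : ℝ}

lemma mul_div_sub_eq_add {ν : ℝ} (hν : γ < ν) : a * ν / (ν - γ) = a + a * γ / (ν - γ) := by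
  field_simp [(sub_pos.2 hν).ne']
  ring

lemma rate_strictMonoOn (ha : 0 < a) (hγ : 0 < γ) : StrictMonoOn (rate a γ) (Ioi γ) := by
  intro μ (hμ : γ < μ) ν (hν : γ < ν) hμν
  have harg : a * γ / (ν - γ) < a * γ / (μ - γ) :=
    div_lt_div_of_pos_left (mul_pos ha hγ) (sub_pos.2 hμ) (sub_lt_sub_right hμν γ)
  have hpos : 0 < a + a * γ / (ν - γ) := by have := sub_pos.2 hν; positivity
  unfold rate
  rw [mul_div_sub_eq_add hμ, mul_div_sub_eq_add hν]
  exact mul_lt_mul_of_pos_left (expIntegralE1_strictAntiOn hpos (hpos.trans (by linarith))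
    (by linarith)) (div_pos (Real.exp_pos a) (Real.log_pos one_lt_two))

lemma hasDerivAt_queueLength (ha : 0 < a) (hγ : 0 < γ) {ν : ℝ} (hν : γ < ν) :
    HasDerivAt (queueLength a γ β lam cInf) (lam / β * (rate a γ ν - lam)) ν := by
  have hνγ : ν - γ ≠ 0 := (sub_pos.2 hν).ne'
  have hν0 : 0 < ν := hγ.trans hν
  have hdz₁ : HasDerivAt (fun x => a * x / (x - γ)) (-(a * γ) / (ν - γ) ^ 2) ν := by
    refine (((hasDerivAt_id ν).const_mul a).div ((hasDerivAt_id ν).sub_const γ) hνγ).congr_deriv ?_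
    simp only [id]
    field_simp
    ring
  have hdz₂ : HasDerivAt (fun x => a * γ / (x - γ)) (-(a * γ) / (ν - γ) ^ 2) ν := by
    refine ((hasDerivAt_const ν (a * γ)).div ((hasDerivAt_id ν).sub_const γ) hνγ).congr_deriv ?_
    simp only [id]
    field_simp
    ring
  have hE₁ := (hasDerivAt_expIntegralE1 (div_pos (mul_pos ha hν0) (sub_pos.2 hν))).comp ν hdz₁
  have hE₂ := (hasDerivAt_expIntegralE1 (div_pos (mul_pos ha hγ) (sub_pos.2 hν))).comp ν hdz₂
  have hQ := ((((hasDerivAt_id ν).const_mul (Real.exp a / Real.log 2)).mul hE₁).sub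
    ((hasDerivAt_id ν).const_mul lam) |>.sub (hE₂.const_mul (γ / Real.log 2))
    |>.add_const cInf).const_mul (lam / β)
  have hexp : Real.exp (-(a * γ / (ν - γ))) = Real.exp a * Real.exp (-(a * ν / (ν - γ))) := by
    rw [← Real.exp_add, mul_div_sub_eq_add hν]
    ring_nf
  refine hQ.congr_deriv ?_
  simp only [rate, Function.comp, id, hexp]
  field_simp
  ring

lemma continuousOn_queueLength (ha : 0 < a) (hγ : 0 < γ) :
    ContinuousOn (queueLength a γ β lam cInf) (Ioi γ) :=
  fun _ hν => (hasDerivAt_queueLength ha hγ hν).continuousAt.continuousWithinAt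

lemma queueLength_strictMonoOn (ha : 0 < a) (hγ : 0 < γ) (hβ : 0 < β) (hlam : 0 < lam) {d : ℝ}
    (hd : γ < d) (hdEq : rate a γ d = lam) :
    StrictMonoOn (queueLength a γ β lam cInf) (Ici d) := by
  refine strictMonoOn_of_hasDerivWithinAt_pos (convex_Ici d)
    ((continuousOn_queueLength ha hγ).mono (Ici_subset_Ioi.2 hd))
    (fun ν hν => (hasDerivAt_queueLength ha hγ (hd.trans_le (interior_subset hν))).hasDerivWithinAt)
    fun ν hν => ?_
  rw [interior_Ici] at hν
  have hrate := rate_strictMonoOn ha hγ hd (hd.trans hν) hν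
  exact mul_pos (div_pos hlam hβ) (by linarith)

lemma expIntegralE1_le_log_sub_log_add_one (ha : 0 < a) (hγ : 0 < γ) {ν : ℝ}
    (hν : γ + a * γ ≤ ν) :
    expIntegralE1 (a * γ / (ν - γ)) ≤ Real.log ν - Real.log (a * γ) + 1 := by
  have haγ : 0 < a * γ := mul_pos ha hγ
  have hνγ : 0 < ν - γ := by linarith
  calc expIntegralE1 (a * γ / (ν - γ)) ≤ -Real.log (a * γ / (ν - γ)) + 1 :=
        expIntegralE1_le_neg_log_add_one (div_pos haγ hνγ) ((div_le_one hνγ).2 (by linarith))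
    _ = Real.log (ν - γ) - Real.log (a * γ) + 1 := by
        rw [Real.log_div haγ.ne' hνγ.ne']
        ring
    _ ≤ Real.log ν - Real.log (a * γ) + 1 := by
        gcongr
        linarith

lemma tendsto_queueLength_atTop (ha : 0 < a) (hγ : 0 < γ) (hβ : 0 < β) (hlam : 0 < lam)
    {ν₀ : ℝ} (hν₀ : γ < ν₀) (hrate : lam < rate a γ ν₀) :
    Tendsto (queueLength a γ β lam cInf) atTop atTop := by
  have hK : 0 ≤ γ / Real.log 2 := div_nonneg hγ.le (Real.log_nonneg one_le_two)
  have hlower := (tendsto_mul_sub_mul_log_add_atTop (γ / Real.log 2)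
    (γ / Real.log 2 * (Real.log (a * γ) - 1) + cInf)
    (sub_pos.2 hrate)).const_mul_atTop (div_pos hlam hβ)
  refine tendsto_atTop_mono' atTop ?_ hlower
  filter_upwards [eventually_ge_atTop ν₀, eventually_ge_atTop (γ + a * γ)] with ν hν₀ν hν
  have hlinear : (rate a γ ν₀ - lam) * ν ≤ (rate a γ ν - lam) * ν :=
    mul_le_mul_of_nonneg_right
      (by linarith [(rate_strictMonoOn ha hγ).monotoneOn hν₀ (hν₀.trans_le hν₀ν) hν₀ν])
      (by linarith)
  have hlog := mul_le_mul_of_nonneg_left (expIntegralE1_le_log_sub_log_add_one ha hγ hν) hK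
  unfold queueLength
  unfold rate at hlinear ⊢
  refine mul_le_mul_of_nonneg_left ?_ (div_pos hlam hβ).le
  linarith

end ParametricQueue

open ParametricQueue in
theorem parametric_queue_bijection_general (a γ β lam : ℝ)
    (ha : 0 < a) (hγ : 0 < γ) (hβ : 0 < β) (hlam : 0 < lam)
    (d : ℝ) (hd : γ < d)
    (hdEq : Real.exp a / Real.log 2 * expIntegralE1 (a * d / (d - γ)) = lam)
    (cInf : ℝ) (hcInf : cInf = γ / Real.log 2 * expIntegralE1 (a * γ / (d - γ)))
    (Q : ℝ → ℝ)
    (hQ : ∀ ν ∈ Set.Ioi γ,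
      Q ν = lam / β * (Real.exp a / Real.log 2 * ν * expIntegralE1 (a * ν / (ν - γ))
        - lam * ν - γ / Real.log 2 * expIntegralE1 (a * γ / (ν - γ)) + cInf)) :
    Q d = 0 ∧ StrictMonoOn Q (Set.Ici d) ∧ Tendsto Q atTop atTop ∧
      Set.BijOn Q (Set.Ici d) (Set.Ici (0 : ℝ)) := by
  have hQeq : EqOn (queueLength a γ β lam cInf) Q (Ici d) :=
    fun ν hν => (hQ ν (hd.trans_le hν)).symm
  have hzero : Q d = 0 := by
    rw [hQ d hd, hcInf]
    linear_combination (lam / β * d) * hdEq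
  have hmono : StrictMonoOn Q (Ici d) := (queueLength_strictMonoOn ha hγ hβ hlam hd hdEq).congr hQeq
  have hcont : ContinuousOn Q (Ici d) :=
    ((continuousOn_queueLength ha hγ).mono (Ici_subset_Ioi.2 hd)).congr hQeq.symm
  have hd₁ : γ < d + 1 := by linarith
  have hrate : lam < rate a γ (d + 1) := by
    rw [← hdEq]
    exact rate_strictMonoOn ha hγ hd hd₁ (lt_add_one d)
  have htop : Tendsto Q atTop atTop :=
    (tendsto_queueLength_atTop ha hγ hβ hlam hd₁ hrate).congr'
      (eventually_of_mem (Ici_mem_atTop d) hQeq)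
  exact ⟨hzero, hmono, htop, hzero ▸ hmono.bijOn_Ici_of_tendsto hcont htop⟩

/-- The parametric queue-length map
`Q(ν) = (λ/β)((e^a/ln 2) ν E1(aν/(ν-γ)) - λν - (γ/ln 2) E1(aγ/(ν-γ)) + c∞)`
satisfies `Q(d) = 0`, is strictly increasing on `[d, ∞)`, tends to `∞`,
and is a bijection from `[d, ∞)` onto `[0, ∞)`. -/
theorem parametric_queue_bijection (a γ β lam : ℝ)
    (ha : 0 < a) (hγ : 0 < γ) (hβ : 0 < β) (hlam : 0 < lam)
    (hlt : lam < Real.exp a / Real.log 2 * expIntegralE1 a)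
    (d : ℝ) (hd : γ < d)
    (hdEq : Real.exp a / Real.log 2 * expIntegralE1 (a * d / (d - γ)) = lam)
    (hdUniq : ∀ d' : ℝ, γ < d' →
      Real.exp a / Real.log 2 * expIntegralE1 (a * d' / (d' - γ)) = lam → d' = d)
    (cInf : ℝ) (hcInf : cInf = γ / Real.log 2 * expIntegralE1 (a * γ / (d - γ)))
    (Q : ℝ → ℝ)
    (hQ : ∀ ν ∈ Set.Ioi γ,
      Q ν = lam / β * (Real.exp a / Real.log 2 * ν * expIntegralE1 (a * ν / (ν - γ))
        - lam * ν - γ / Real.log 2 * expIntegralE1 (a * γ / (ν - γ)) + cInf)) :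
    Q d = 0 ∧ StrictMonoOn Q (Set.Ici d) ∧ Tendsto Q atTop atTop ∧
      Set.BijOn Q (Set.Ici d) (Set.Ici (0 : ℝ)) :=
  parametric_queue_bijection_general a γ β lam ha hγ hβ hlam d hd hdEq cInf hcInf Q hQ
end
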